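/- Let λ ∈ ℚ(√5) ⊆ ℝ and let μ = λ^τ be its conjugate under the nontrivial automorphism of ℚ(√5). If P₃(λ) = P₃(μ) and λ·P₂(μ) = μ·P₂(λ), then either λ = μ (so λ ∈ ℚ) or λ ∈ {φ, −φ, φ^τ, −φ^τ}. -/
import Mathlib


/-- `P₂(t) = t² - 1`. -/
def P2 {R : Type*} [CommRing R] (t : R) : R := t ^ 2 - 1
/-- `P₃(t) = t³ - 2t`. -/
def P3 {R : Type*} [CommRing R] (t : R) : R := t ^ 3 - 2 * t

noncomputable def phi : ℝ := (1 + Real.sqrt 5) / 2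
noncomputable def phiTau : ℝ := (1 - Real.sqrt 5) / 2

/-- If `λ = q₁ + q₂√5 ∈ ℚ(√5) ⊆ ℝ` and `μ = q₁ - q₂√5` is its conjugate, and
`P₃(λ) = P₃(μ)` and `λP₂(μ) = μP₂(λ)`, then `λ = μ` or `λ ∈ {±φ, ±φ^τ}`. -/
theorem conjugate_pair_rigidity (q₁ q₂ : ℚ)
    (l m : ℝ)
    (hl : l = (q₁ : ℝ) + (q₂ : ℝ) * Real.sqrt 5)
    (hm : m = (q₁ : ℝ) - (q₂ : ℝ) * Real.sqrt 5)
    (h3 : P3 l = P3 m) (h2 : l * P2 m = m * P2 l) :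
    l = m ∨ l = phi ∨ l = -phi ∨ l = phiTau ∨ l = -phiTau := by
  have h5 : Real.sqrt 5 ^ 2 = 5 := Real.sq_sqrt (by norm_num)
  simp only [P2, P3] at h3 h2
  have key : (l - m) * ((l ^ 2 - l - 1) * (l ^ 2 + l - 1)) = 0 := by
    linear_combination l ^ 2 * h3 + (l ^ 2 + l * m - 1) * h2
  rcases mul_eq_zero.1 key with h | h
  · left; linarith
  rcases mul_eq_zero.1 h with h | h
  · have : (l - phi) * (l - phiTau) = 0 := by
      unfold phi phiTau; linear_combination h - (1/4) * h5
    rcases mul_eq_zero.1 this with h' | h'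
    · right; left; linarith
    · right; right; right; left; linarith
  · have : (l - (-phi)) * (l - (-phiTau)) = 0 := by
      unfold phi phiTau; linear_combination h - (1/4) * h5
    rcases mul_eq_zero.1 this with h' | h'
    · right; right; left; linarith
    · right; right; right; right; linarith
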